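/- Let $\xi$ be a nonnegative distribution on $\mathbb{T}^2$ and $f$ a continuous function on $\mathbb{T}^2$, and define $\mathcal{M}(f,\xi)$ to be the distribution associated to the measure $f(x)\mu_\xi(dx)$, where $\mu_\xi$ is the Borel measure representing $\xi$. Then for every $s > 0$ and $p,q \in [1,\infty]$, there is a constant $C$ (depending only on $s,p,q$) such that $\|\mathcal{M}(f,\xi)\|_{B_{p,q}^{-s}} \le C \|f\|_{C(\mathbb{T}^2)} \|\xi\|_{B_{p,q}^{-s}}$ whenever $\xi \in B_{p,q}^{-s}$ is nonnegative. -/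

import Mathlib

open MeasureTheory ENNReal

/-- `|k|²` for a frequency `k ∈ ℤ²`. -/
def freqSq (k : ℤ × ℤ) : ℝ := (k.1 : ℝ) ^ 2 + (k.2 : ℝ) ^ 2

/-- The heat kernel `p_t` of `e^{tΔ}` on the torus `𝕋² = (ℝ/2πℤ)²`, written as a
function of the difference variable on `ℝ²`. -/
noncomputable def torusHeatKernel (t : ℝ) (z : ℝ × ℝ) : ℝ :=
  ((2 * Real.pi) ^ 2)⁻¹ *
    ∑' k : ℤ × ℤ, Real.exp (-(freqSq k) * t) * Real.cos ((k.1 : ℝ) * z.1 + (k.2 : ℝ) * z.2)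

/-- A fundamental domain of the torus in `ℝ²`. -/
def torusDom : Set (ℝ × ℝ) := Set.Icc (0:ℝ) (2 * Real.pi) ×ˢ Set.Icc (0:ℝ) (2 * Real.pi)

/-- `e^{tΔ}(f·μ)` for a measure `μ` on the torus and a continuous function `f`. -/
noncomputable def heatOf (μ : Measure (ℝ × ℝ)) (f : ℝ × ℝ → ℝ) (t : ℝ) (x : ℝ × ℝ) : ℝ :=
  ∫ y, torusHeatKernel t (x - y) * f y ∂μ

/-- The Besov `B^{-s}_{p,q}` norm of `f·μ`, via the heat kernel characterization
`‖ξ‖_{B^{-s}_{p,q}} ≃ ‖e^{Δ}ξ‖_{L^p} + ‖ t^{s/2} ‖e^{tΔ}ξ‖_{L^p} ‖_{L^q([0,1], dt/t)}`. -/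
noncomputable def besovNegNorm (s : ℝ) (p q : ℝ≥0∞) (μ : Measure (ℝ × ℝ))
    (f : ℝ × ℝ → ℝ) : ℝ≥0∞ :=
  eLpNorm (heatOf μ f 1) p (volume.restrict torusDom) +
    eLpNorm (fun t : ℝ => t ^ (s / 2) * (eLpNorm (heatOf μ f t) p (volume.restrict torusDom)).toReal)
      q ((volume.restrict (Set.Ioo (0:ℝ) 1)).withDensity fun t => ENNReal.ofReal t⁻¹)


/-!
The heat kernel of the torus factorises as a product of two Jacobi theta functions,
`p_t(z) = (2π)⁻² θ(z₁/2π, it/π) θ(z₂/2π, it/π)`, and the functional equation of `θ` rewrites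
`θ(x, ia)` as a positive multiple of a series of positive reals, so `p_t > 0`. Hence
`|e^{tΔ}(f·μ)| ≤ ‖f‖_∞ e^{tΔ}μ` pointwise for a nonnegative measure `μ`, and both parts of the
Besov norm inherit this bound (with `C = 1`).
-/

open Complex Real
open scoped ComplexOrder

lemma jacobiTheta₂_term_eq_norm {z τ : ℂ} (hz : z.re = 0) (hτ : τ.re = 0) (n : ℤ) :
    jacobiTheta₂_term n z τ = ‖jacobiTheta₂_term n z τ‖ := by
  have hw : 2 * π * I * n * z + π * I * n ^ 2 * τ =
      ((-π * n ^ 2 * τ.im - 2 * π * n * z.im : ℝ) : ℂ) := by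
    conv_lhs => rw [← re_add_im z, ← re_add_im τ, hz, hτ]
    push_cast
    ring_nf
    rw [I_sq]
    ring
  rw [norm_jacobiTheta₂_term, jacobiTheta₂_term, hw, ofReal_exp]

lemma jacobiTheta₂_pos_of_re_eq_zero {z τ : ℂ} (hz : z.re = 0) (hτ : τ.re = 0) (him : 0 < τ.im) :
    0 < jacobiTheta₂ z τ := by
  have hs : Summable fun n : ℤ => ‖jacobiTheta₂_term n z τ‖ :=
    summable_norm_iff.mpr ((summable_jacobiTheta₂_term_iff z τ).mpr him)
  rw [jacobiTheta₂, tsum_congr (jacobiTheta₂_term_eq_norm hz hτ), ← ofReal_tsum, zero_lt_real]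
  exact hs.tsum_pos (fun _ => norm_nonneg _) 0 (norm_pos_iff.mpr (Complex.exp_ne_zero _))

lemma jacobiTheta₂_ofReal_pos (x : ℝ) {a : ℝ} (ha : 0 < a) : 0 < jacobiTheta₂ x (a * I) := by
  have ha' : (a : ℂ) ≠ 0 := ofReal_ne_zero.mpr ha.ne'
  -- after the functional equation, `x / (a * I)` and `-1 / (a * I)` are purely imaginary
  rw [jacobiTheta₂_functional_equation]
  refine mul_pos (mul_pos ?_ ?_) (jacobiTheta₂_pos_of_re_eq_zero ?_ ?_ ?_)
  · have : -I * (a * I) = a := by ring_nf; rw [I_sq]; ring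
    rw [this, show (1 / 2 : ℂ) = ((1 / 2 : ℝ) : ℂ) by push_cast; rfl, ← ofReal_cpow ha.le,
      ← Complex.ofReal_one, ← ofReal_div, zero_lt_real]
    positivity
  · have : -π * I * (x : ℂ) ^ 2 / (a * I) = ((-π * x ^ 2 / a : ℝ) : ℂ) := by
      push_cast; field_simp
    rw [this, ← ofReal_exp, zero_lt_real]
    exact Real.exp_pos _
  · simp [div_re]
  · simp [div_re]
  · simpa [div_im] using div_neg_of_neg_of_pos (neg_neg_of_pos ha) (mul_pos ha ha)

lemma norm_jacobiTheta₂_ofReal_le (x : ℝ) {τ : ℂ} (hτ : 0 < τ.im) :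
    ‖jacobiTheta₂ x τ‖ ≤ ∑' n : ℤ, ‖jacobiTheta₂_term n 0 τ‖ := by
  have hnorm (n : ℤ) : ‖jacobiTheta₂_term n x τ‖ = ‖jacobiTheta₂_term n 0 τ‖ := by
    simp only [norm_jacobiTheta₂_term, ofReal_im, zero_im]
  refine (norm_tsum_le_tsum_norm ?_).trans_eq (tsum_congr hnorm)
  exact summable_norm_iff.mpr ((summable_jacobiTheta₂_term_iff _ τ).mpr hτ)

/-- `circleTheta t x = ∑ₙ e^{-n²t} e^{inx}`, which is `2π` times the heat kernel of `ℝ/2πℤ`. -/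
noncomputable def circleTheta (t x : ℝ) : ℂ := jacobiTheta₂ ↑(x / (2 * π)) (↑(t / π) * I)

lemma jacobiTheta₂_term_circle (t x : ℝ) (n : ℤ) :
    jacobiTheta₂_term n ↑(x / (2 * π)) (↑(t / π) * I) = cexp (↑(-n ^ 2 * t) + ↑(n * x) * I) := by
  have hπ : (π : ℂ) ≠ 0 := ofReal_ne_zero.mpr pi_ne_zero
  rw [jacobiTheta₂_term]
  congr 1
  push_cast
  field_simp
  linear_combination (n : ℂ) ^ 2 * t * I_sq

lemma summable_norm_jacobiTheta₂_term_circle {t : ℝ} (ht : 0 < t) (x : ℝ) :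
    Summable fun n : ℤ => ‖jacobiTheta₂_term n ↑(x / (2 * π)) (↑(t / π) * I)‖ :=
  summable_norm_iff.mpr
    ((summable_jacobiTheta₂_term_iff _ _).mpr (by simpa using div_pos ht pi_pos))

lemma torusHeatKernel_eq_re_circleTheta_mul {t : ℝ} (ht : 0 < t) (z : ℝ × ℝ) :
    torusHeatKernel t z = ((2 * π) ^ 2)⁻¹ * (circleTheta t z.1 * circleTheta t z.2).re := by
  have hterm (k : ℤ × ℤ) : rexp (-freqSq k * t) * Real.cos (k.1 * z.1 + k.2 * z.2) =
      (jacobiTheta₂_term k.1 ↑(z.1 / (2 * π)) (↑(t / π) * I) *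
        jacobiTheta₂_term k.2 ↑(z.2 / (2 * π)) (↑(t / π) * I)).re := by
    rw [jacobiTheta₂_term_circle, jacobiTheta₂_term_circle, ← Complex.exp_add,
      show (↑(-k.1 ^ 2 * t) + ↑(k.1 * z.1) * I + (↑(-k.2 ^ 2 * t) + ↑(k.2 * z.2) * I) : ℂ) =
        ↑(-freqSq k * t) + ↑(k.1 * z.1 + k.2 * z.2) * I by simp only [freqSq]; push_cast; ring,
      exp_re, add_re, add_im, ofReal_re, ofReal_im, mul_re, mul_im, I_re, I_im]
    simp
  have h1 := summable_norm_jacobiTheta₂_term_circle ht z.1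
  have h2 := summable_norm_jacobiTheta₂_term_circle ht z.2
  rw [torusHeatKernel, tsum_congr hterm, ← re_tsum (summable_mul_of_summable_norm h1 h2),
    ← tsum_mul_tsum_of_summable_norm h1 h2]
  rfl

lemma circleTheta_pos {t : ℝ} (ht : 0 < t) (x : ℝ) : 0 < circleTheta t x :=
  jacobiTheta₂_ofReal_pos _ (div_pos ht pi_pos)

lemma norm_circleTheta_le {t : ℝ} (ht : 0 < t) (x : ℝ) :
    ‖circleTheta t x‖ ≤ ∑' n : ℤ, ‖jacobiTheta₂_term n 0 (↑(t / π) * I)‖ :=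
  norm_jacobiTheta₂_ofReal_le _ (by simpa using div_pos ht pi_pos)

lemma continuous_circleTheta {t : ℝ} (ht : 0 < t) : Continuous (circleTheta t) := by
  have hτ : 0 < (↑(t / π) * I).im := by simpa using div_pos ht pi_pos
  refine continuous_iff_continuousAt.mpr fun x => ?_
  exact ((differentiableAt_jacobiTheta₂_fst _ hτ).continuousAt).comp
    (Complex.continuous_ofReal.comp (continuous_id.div_const _)).continuousAt

lemma torusHeatKernel_pos {t : ℝ} (ht : 0 < t) (z : ℝ × ℝ) : 0 < torusHeatKernel t z := by
  rw [torusHeatKernel_eq_re_circleTheta_mul ht]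
  exact mul_pos (by positivity)
    (pos_iff.mp (mul_pos (circleTheta_pos ht _) (circleTheta_pos ht _))).1

lemma continuous_torusHeatKernel {t : ℝ} (ht : 0 < t) : Continuous (torusHeatKernel t) := by
  simp_rw [funext (torusHeatKernel_eq_re_circleTheta_mul ht)]
  have := continuous_circleTheta ht
  fun_prop

lemma exists_abs_torusHeatKernel_le {t : ℝ} (ht : 0 < t) : ∃ C, ∀ z, |torusHeatKernel t z| ≤ C := by
  set B := ∑' n : ℤ, ‖jacobiTheta₂_term n 0 (↑(t / π) * I)‖
  refine ⟨((2 * π) ^ 2)⁻¹ * (B * B), fun z => ?_⟩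
  rw [torusHeatKernel_eq_re_circleTheta_mul ht, abs_mul, abs_of_pos (by positivity)]
  gcongr
  calc |(circleTheta t z.1 * circleTheta t z.2).re|
      ≤ ‖circleTheta t z.1‖ * ‖circleTheta t z.2‖ := (abs_re_le_norm _).trans_eq (norm_mul _ _)
    _ ≤ B * B := mul_le_mul (norm_circleTheta_le ht _) (norm_circleTheta_le ht _)
        (norm_nonneg _) ((norm_nonneg _).trans (norm_circleTheta_le ht 0))

instance : IsFiniteMeasure (volume.restrict torusDom) :=
  isFiniteMeasure_restrict.mpr (isCompact_Icc.prod isCompact_Icc).measure_lt_top.ne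

lemma abs_integral_mul_le_mul_integral {α : Type*} [MeasurableSpace α] {μ : Measure α}
    {g f : α → ℝ} {K : ℝ} (hg : 0 ≤ g) (hgi : Integrable g μ) (hf : ∀ y, |f y| ≤ K) :
    |∫ y, g y * f y ∂μ| ≤ K * ∫ y, g y ∂μ := by
  rw [← integral_const_mul K g, ← Real.norm_eq_abs]
  refine norm_integral_le_of_norm_le (hgi.const_mul K) (ae_of_all _ fun y => ?_)
  rw [Real.norm_eq_abs, abs_mul, abs_of_nonneg (hg y), mul_comm K]
  exact mul_le_mul_of_nonneg_left (hf y) (hg y)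

lemma integrable_torusHeatKernel_sub {t : ℝ} (ht : 0 < t) (μ : Measure (ℝ × ℝ))
    [IsFiniteMeasure μ] (x : ℝ × ℝ) : Integrable (fun y => torusHeatKernel t (x - y)) μ := by
  obtain ⟨C, hC⟩ := exists_abs_torusHeatKernel_le ht
  have hmeas : Continuous fun y => torusHeatKernel t (x - y) :=
    (continuous_torusHeatKernel ht).comp (continuous_const.sub continuous_id)
  exact .of_bound hmeas.aestronglyMeasurable C (ae_of_all _ fun y => hC (x - y))

lemma heatOf_one_nonneg {t : ℝ} (ht : 0 < t) (μ : Measure (ℝ × ℝ)) (x : ℝ × ℝ) :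
    0 ≤ heatOf μ (fun _ => 1) t x :=
  integral_nonneg fun y => by simpa using (torusHeatKernel_pos ht (x - y)).le

lemma abs_heatOf_le {t : ℝ} (ht : 0 < t) (μ : Measure (ℝ × ℝ)) [IsFiniteMeasure μ]
    {f : ℝ × ℝ → ℝ} {K : ℝ} (hf : ∀ y, |f y| ≤ K) (x : ℝ × ℝ) :
    |heatOf μ f t x| ≤ K * heatOf μ (fun _ => 1) t x := by
  simpa only [heatOf, mul_one] using abs_integral_mul_le_mul_integral
    (fun y => (torusHeatKernel_pos ht (x - y)).le) (integrable_torusHeatKernel_sub ht μ x) hf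

lemma eLpNorm_heatOf_one_ne_top {t : ℝ} (ht : 0 < t) (μ : Measure (ℝ × ℝ)) [IsFiniteMeasure μ]
    (p : ℝ≥0∞) (ν : Measure (ℝ × ℝ)) [IsFiniteMeasure ν] :
    eLpNorm (heatOf μ (fun _ => 1) t) p ν ≠ ⊤ := by
  obtain ⟨C, hC⟩ := exists_abs_torusHeatKernel_le ht
  have hbound (x : ℝ × ℝ) : ‖heatOf μ (fun _ => 1) t x‖ ≤ C * μ.real Set.univ := by
    simpa only [heatOf, mul_one] using
      norm_integral_le_of_norm_le_const (ae_of_all μ fun y => hC (x - y))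
  exact ne_top_of_le_ne_top
    (mul_ne_top (rpow_ne_top_of_nonneg (by positivity) (measure_ne_top _ _)) ofReal_ne_top)
    (eLpNorm_le_of_ae_bound (ae_of_all _ hbound))

lemma besovNegNorm_le_of_abs_heatOf_le {s : ℝ} {p q : ℝ≥0∞} {μ ν : Measure (ℝ × ℝ)}
    {f g : ℝ × ℝ → ℝ} {K : ℝ} (hK : 0 ≤ K)
    (hle : ∀ t, 0 < t → ∀ x, |heatOf μ f t x| ≤ K * |heatOf ν g t x|)
    (hfin : ∀ t, 0 < t → eLpNorm (heatOf ν g t) p (volume.restrict torusDom) ≠ ⊤) :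
    besovNegNorm s p q μ f ≤ ENNReal.ofReal K * besovNegNorm s p q ν g := by
  have hLp (t : ℝ) (ht : 0 < t) : eLpNorm (heatOf μ f t) p (volume.restrict torusDom) ≤
      ENNReal.ofReal K * eLpNorm (heatOf ν g t) p (volume.restrict torusDom) :=
    eLpNorm_le_mul_eLpNorm_of_ae_le_mul (ae_of_all _ (hle t ht)) p
  have hIoo : ∀ᵐ t ∂(volume.restrict (Set.Ioo (0:ℝ) 1)).withDensity fun t => ENNReal.ofReal t⁻¹,
      t ∈ Set.Ioo (0:ℝ) 1 :=
    (withDensity_absolutelyContinuous _ _).ae_le (ae_restrict_mem measurableSet_Ioo)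
  rw [besovNegNorm, besovNegNorm, mul_add]
  refine add_le_add (hLp 1 one_pos) (eLpNorm_le_mul_eLpNorm_of_ae_le_mul ?_ q)
  filter_upwards [hIoo] with t htI
  have ht : 0 < t := htI.1
  have hreal := ENNReal.toReal_mono (mul_ne_top ofReal_ne_top (hfin t ht)) (hLp t ht)
  rw [toReal_mul, toReal_ofReal hK] at hreal
  simp only [norm_mul, Real.norm_eq_abs, abs_of_nonneg (Real.rpow_nonneg ht.le _),
    abs_of_nonneg toReal_nonneg]
  rw [mul_left_comm]
  exact mul_le_mul_of_nonneg_left hreal (Real.rpow_nonneg ht.le _)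

theorem product_nonneg_distribution_besov_bound_general (s : ℝ)
    (p q : ℝ≥0∞) :
    ∃ C : ℝ, 0 < C ∧ ∀ μ : Measure (ℝ × ℝ), IsFiniteMeasure μ → μ torusDomᶜ = 0 →
      ∀ f : ℝ × ℝ → ℝ, Continuous f → ∀ K : ℝ, (∀ y, |f y| ≤ K) →
        besovNegNorm s p q μ f ≤
          ENNReal.ofReal (C * K) * besovNegNorm s p q μ (fun _ => 1) := by
  refine ⟨1, one_pos, fun μ _ _ f _ K hf => ?_⟩
  rw [one_mul]
  refine besovNegNorm_le_of_abs_heatOf_le ((abs_nonneg _).trans (hf 0)) (fun t ht x => ?_)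
    (fun t ht => eLpNorm_heatOf_one_ne_top ht μ p _)
  rw [abs_of_nonneg (heatOf_one_nonneg ht μ x)]
  exact abs_heatOf_le ht μ hf x

/-- The product `𝓜(f,ξ) = f·μ_ξ` of a continuous function and a nonnegative distribution
(identified with the nonnegative measure `μ` representing it, supported in a fundamental
domain) satisfies `‖𝓜(f,ξ)‖_{B^{-s}_{p,q}} ≤ C ‖f‖_{C(𝕋²)} ‖ξ‖_{B^{-s}_{p,q}}`. -/
theorem product_nonneg_distribution_besov_bound (s : ℝ) (hs : 0 < s)
    (p q : ℝ≥0∞) (hp : 1 ≤ p) (hq : 1 ≤ q) :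
    ∃ C : ℝ, 0 < C ∧ ∀ μ : Measure (ℝ × ℝ), IsFiniteMeasure μ → μ torusDomᶜ = 0 →
      ∀ f : ℝ × ℝ → ℝ, Continuous f → ∀ K : ℝ, (∀ y, |f y| ≤ K) →
        besovNegNorm s p q μ f ≤
          ENNReal.ofReal (C * K) * besovNegNorm s p q μ (fun _ => 1) :=
  product_nonneg_distribution_besov_bound_general s p q
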